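/- For n ≥ 1, Ψ(x·Pₙ(x)) = 0, where Pₙ(x) = Σ_{k=0}^{n} (q^{−n};q)_k (q^{n+2};q)_k (q(1+(q−1)x);q)_k qᵏ / ((q;q)_k² (q²;q)_k). Hence the ratios βₙ₊₁/β₁ (n≥0) are the moments of this q-Hahn family with parameters (c,d)=(0,1). -/

import Mathlib

open Finset Polynomial PowerSeries

noncomputable section

/-- The variable `q`, viewed as a rational function over `ℚ`. -/
def qv : RatFunc ℚ := RatFunc.X

/-- The Carlitz q-Bernoulli numbers: `β 0 = 1` together with the umbral recurrence
`q·(qβ+1)^n − β_n = [n = 1]` for `n ≥ 1`, where after binomial expansion the powers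
`β^k` are replaced by `β k`. -/
def IsCarlitz (β : ℕ → RatFunc ℚ) : Prop :=
  β 0 = 1 ∧ ∀ n : ℕ, 1 ≤ n →
    qv * (∑ k ∈ Finset.range (n + 1), (n.choose k : RatFunc ℚ) * qv ^ k * β k) - β n
      = if n = 1 then 1 else 0

/-- The linear functional `Ψ` on polynomials in `x`, sending `xⁿ` to `β n`. -/
def Psi (β : ℕ → RatFunc ℚ) (p : Polynomial (RatFunc ℚ)) : RatFunc ℚ :=
  p.sum fun n a => a * β n

/-- The q-Pochhammer symbol `(a; q)_k = (1−a)(1−qa)⋯(1−q^{k−1}a)`. -/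
def qPoch (a : RatFunc ℚ) (k : ℕ) : RatFunc ℚ :=
  ∏ j ∈ Finset.range k, (1 - qv ^ j * a)

/-- The polynomial q-Pochhammer symbol `(q(1+(q−1)x); q)_k`. -/
def polyPoch (k : ℕ) : Polynomial (RatFunc ℚ) :=
  ∏ j ∈ Finset.range k,
    (1 - Polynomial.C (qv ^ (j + 1)) * (1 + Polynomial.C (qv - 1) * Polynomial.X))

/-- The q-Hahn-type polynomials `Pₙ` with parameters `(c, d) = (0, 1)`. -/
def P (n : ℕ) : Polynomial (RatFunc ℚ) :=
  ∑ k ∈ Finset.range (n + 1),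
    Polynomial.C (qPoch (qv ^ (-(n : ℤ))) k * qPoch (qv ^ (n + 2)) k * qv ^ k /
      ((qPoch qv k) ^ 2 * qPoch (qv ^ 2) k)) * polyPoch k


/-!
The Carlitz recurrence says precisely that `Λ(p) = q·Ψ(p(1+qx)) − Ψ(p)` only sees the first two
coefficients of `p`: `Λ(p) = (q−1)·p(0) + p'(0)`. Put `z = 1 + (q−1)x`. The substitution
`x ↦ 1+qx` sends `z` to `qz`, hence `(z;q)_{k+1}` to `(qz;q)_{k+1}`, while
`(z;q)_{k+1} = (1−q)x·(qz;q)_k`. Applying `Λ` to `(z;q)_{k+1}`, together with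
`(qz;q)_{k+1} = (qz;q)_k·(1 − q^{k+1}z)`, gives a recurrence solved by
`Ψ(x·(qz;q)_k) = (q−1)(q;q)_k/(1−q^{k+2})`. With this, `Ψ(x·Pₙ)` becomes a terminating basic
hypergeometric sum with numerator parameters `a = q^{−n}`, `b = q^{n+2}`; since `ab = q²` it
telescopes, and the boundary term carries the vanishing factor `(q^{−n};q)_{n+1}`.
-/

local notation "x" => (Polynomial.X : (RatFunc ℚ)[X])

section Psi

variable (β : ℕ → RatFunc ℚ)

def psiₗ : (RatFunc ℚ)[X] →ₗ[RatFunc ℚ] RatFunc ℚ :=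
  lsum fun n => LinearMap.mulRight (RatFunc ℚ) (β n)

theorem coe_psiₗ : ⇑(psiₗ β) = Psi β := rfl

theorem psi_X_pow (n : ℕ) : Psi β (x ^ n) = β n := by
  rw [X_pow_eq_monomial, Psi, sum_monomial_index (1 : RatFunc ℚ) _ (zero_mul _), one_mul]

theorem psi_C_mul (a : RatFunc ℚ) (p : (RatFunc ℚ)[X]) :
    Psi β (Polynomial.C a * p) = a * Psi β p := by
  rw [← Polynomial.smul_eq_C_mul, ← coe_psiₗ, map_smul, smul_eq_mul]

theorem psi_one_add_qv_mul_X_pow (n : ℕ) :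
    Psi β ((1 + Polynomial.C qv * x) ^ n)
      = ∑ k ∈ range (n + 1), (n.choose k : RatFunc ℚ) * qv ^ k * β k := by
  rw [add_comm, add_pow, ← coe_psiₗ, map_sum]
  refine sum_congr rfl fun k _ => ?_
  rw [one_pow, mul_one, mul_pow, ← C_pow, ← C_eq_natCast, mul_right_comm, ← C_mul, coe_psiₗ,
    psi_C_mul, psi_X_pow, mul_comm (qv ^ k)]

end Psi

/-- `(z; q)_k` for `z = 1 + (q−1)x`; in this notation `polyPoch k = (qz; q)_k`. -/
def zPoch (k : ℕ) : (RatFunc ℚ)[X] :=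
  ∏ j ∈ range k, (1 - Polynomial.C (qv ^ j) * (1 + Polynomial.C (qv - 1) * x))

theorem zPoch_comp (k : ℕ) : (zPoch k).comp (1 + Polynomial.C qv * x) = polyPoch k := by
  rw [zPoch, polyPoch, Polynomial.prod_comp]
  refine prod_congr rfl fun j _ => ?_
  simp only [sub_comp, add_comp, mul_comp, one_comp, C_comp, X_comp, pow_succ, C_mul, map_sub,
    map_one]
  ring

theorem zPoch_succ (k : ℕ) : zPoch (k + 1) = Polynomial.C (1 - qv) * (x * polyPoch k) := by
  rw [zPoch, prod_range_succ', polyPoch, pow_zero, map_one, one_mul]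
  simp only [map_sub, map_one]
  ring

theorem polyPoch_succ (k : ℕ) :
    polyPoch (k + 1) = polyPoch k - qv ^ (k + 1) • polyPoch k
      - (qv ^ (k + 1) * (qv - 1)) • (x * polyPoch k) := by
  rw [polyPoch, prod_range_succ, ← polyPoch]
  simp only [Polynomial.smul_eq_C_mul, map_mul, map_sub, map_one]
  ring

theorem polyPoch_coeff_zero (k : ℕ) : (polyPoch k).coeff 0 = qPoch qv k := by
  rw [coeff_zero_eq_eval_zero, polyPoch, eval_prod, qPoch]
  simp [pow_succ]

theorem qPoch_succ (a : RatFunc ℚ) (k : ℕ) : qPoch a (k + 1) = qPoch a k * (1 - qv ^ k * a) :=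
  prod_range_succ _ _

theorem qv_ne_zero : qv ≠ 0 := RatFunc.X_ne_zero

theorem qv_pow_ne_one {m : ℕ} (hm : m ≠ 0) : qv ^ m ≠ 1 := by
  intro h
  have : (Polynomial.X ^ m : ℚ[X]) = 1 := by
    apply RatFunc.algebraMap_injective ℚ
    rwa [map_pow, RatFunc.algebraMap_X, map_one]
  simpa [hm] using congrArg natDegree this

theorem qv_sub_one_ne_zero : qv - 1 ≠ 0 :=
  sub_ne_zero.2 (by simpa using qv_pow_ne_one one_ne_zero)

theorem one_sub_qv_pow_ne_zero {m : ℕ} (hm : m ≠ 0) : 1 - qv ^ m ≠ 0 :=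
  sub_ne_zero.2 (qv_pow_ne_one hm).symm

theorem one_sub_qv_zpow_neg_ne_zero {n : ℕ} (hn : n ≠ 0) : 1 - qv ^ (-(n : ℤ)) ≠ 0 := by
  rw [zpow_neg, zpow_natCast, sub_ne_zero]
  exact (inv_ne_one.2 (qv_pow_ne_one hn)).symm

theorem qv_zpow_neg_mul_qv_pow_add_two (n : ℕ) : qv ^ (-(n : ℤ)) * qv ^ (n + 2) = qv ^ 2 := by
  rw [pow_add, ← mul_assoc, ← zpow_natCast, ← zpow_add₀ qv_ne_zero, neg_add_cancel, zpow_zero,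
    one_mul]

theorem qPoch_qv_pow_ne_zero {i : ℕ} (hi : i ≠ 0) (k : ℕ) : qPoch (qv ^ i) k ≠ 0 :=
  prod_ne_zero_iff.2 fun j _ => by rw [← pow_add]; exact one_sub_qv_pow_ne_zero (by omega)

theorem qPoch_qv_ne_zero (k : ℕ) : qPoch qv k ≠ 0 := by
  simpa using qPoch_qv_pow_ne_zero one_ne_zero k

section Telescoping

def hahnCoeff (a b : RatFunc ℚ) (k : ℕ) : RatFunc ℚ :=
  qPoch a k * qPoch b k / (qPoch qv k * qPoch (qv ^ 2) k)

def hahnTerm (a b : RatFunc ℚ) (k : ℕ) : RatFunc ℚ :=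
  qv ^ k * hahnCoeff a b k / (1 - qv ^ (k + 2))

theorem hahnCoeff_qv_zpow_neg_succ (n : ℕ) (b : RatFunc ℚ) :
    hahnCoeff (qv ^ (-(n : ℤ))) b (n + 1) = 0 := by
  rw [hahnCoeff, qPoch_succ, zpow_neg, zpow_natCast, mul_inv_cancel₀ (pow_ne_zero n qv_ne_zero)]
  simp

variable {a b : RatFunc ℚ} (hab : a * b = qv ^ 2)
include hab

theorem mul_hahnTerm_eq_sub (k : ℕ) :
    (1 - a) * (1 - b) * hahnTerm a b k
      = (1 - qv ^ (k + 1)) * hahnCoeff a b (k + 1) - (1 - qv ^ k) * hahnCoeff a b k := by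
  have := one_sub_qv_pow_ne_zero (m := k + 1) (by omega)
  have := one_sub_qv_pow_ne_zero (m := k + 2) (by omega)
  have := qPoch_qv_ne_zero k
  have := qPoch_qv_pow_ne_zero two_ne_zero k
  simp only [hahnTerm, hahnCoeff, qPoch_succ, ← pow_succ, ← pow_add]
  field_simp
  -- `(1 − q^k a)(1 − q^k b) − (1 − q^k)(1 − q^{k+2})`
  --   `= q^k (1 − a)(1 − b) + (q^{2k} − q^k)(ab − q²)`
  linear_combination qv ^ k * (1 - qv ^ k) * qPoch a k * qPoch b k * hab

theorem mul_sum_hahnTerm (N : ℕ) :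
    (1 - a) * (1 - b) * ∑ k ∈ range N, hahnTerm a b k = (1 - qv ^ N) * hahnCoeff a b N := by
  rw [mul_sum, sum_congr rfl fun k _ => mul_hahnTerm_eq_sub hab k,
    sum_range_sub (fun k => (1 - qv ^ k) * hahnCoeff a b k), pow_zero, sub_self, zero_mul,
    sub_zero]

end Telescoping

section Carlitz

variable {β : ℕ → RatFunc ℚ} (h : IsCarlitz β)
include h

theorem IsCarlitz.psi_comp_sub (p : (RatFunc ℚ)[X]) :
    qv * Psi β (p.comp (1 + Polynomial.C qv * x)) - Psi β p
      = (qv - 1) * p.coeff 0 + p.coeff 1 := by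
  induction p using Polynomial.induction_on' with
  | add p r hp hr =>
    simp only [add_comp, ← coe_psiₗ, map_add, coeff_add] at hp hr ⊢
    linear_combination hp + hr
  | monomial n a =>
    rw [← C_mul_X_pow_eq_monomial, mul_comp, C_comp, X_pow_comp, psi_C_mul, psi_C_mul,
      psi_one_add_qv_mul_X_pow, psi_X_pow, Polynomial.coeff_C_mul_X_pow,
      Polynomial.coeff_C_mul_X_pow]
    obtain _ | _ | n := n
    · simp [h.1, sub_mul]
    · linear_combination (norm := (simp; ring)) a * h.2 1 le_rfl
    · linear_combination (norm := (simp; ring)) a * h.2 (n + 2) (by omega)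

theorem IsCarlitz.psi_polyPoch_succ (k : ℕ) :
    qv * Psi β (polyPoch (k + 1)) = (1 - qv) * (Psi β (x * polyPoch k) + qPoch qv k) := by
  have := h.psi_comp_sub (zPoch (k + 1))
  rw [zPoch_comp] at this
  simp only [zPoch_succ, psi_C_mul, Polynomial.coeff_C_mul, coeff_X_mul_zero,
    coeff_X_mul, polyPoch_coeff_zero] at this
  linear_combination this

theorem IsCarlitz.psi_polyPoch (k : ℕ) :
    (qv ^ (k + 1) - 1) * Psi β (polyPoch k) = (qv - 1) * qPoch qv k := by
  induction k with
  | zero =>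
    rw [polyPoch, prod_range_zero, ← pow_zero x, psi_X_pow, h.1]
    simp [qPoch]
  | succ k ih =>
    have hψ := congrArg (psiₗ β) (polyPoch_succ k)
    simp only [map_sub, map_smul, smul_eq_mul, coe_psiₗ] at hψ
    rw [qPoch_succ]
    linear_combination qv ^ (k + 1) * h.psi_polyPoch_succ k - hψ + ih

theorem IsCarlitz.psi_X_mul_polyPoch (k : ℕ) :
    Psi β (x * polyPoch k) = (qv - 1) * qPoch qv k / (1 - qv ^ (k + 2)) := by
  have hU := h.psi_polyPoch (k + 1)
  rw [qPoch_succ] at hU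
  rw [eq_div_iff (one_sub_qv_pow_ne_zero (by omega))]
  apply mul_left_cancel₀ qv_sub_one_ne_zero
  linear_combination (1 - qv ^ (k + 2)) * h.psi_polyPoch_succ k + qv * hU

theorem IsCarlitz.mul_psi_X_mul_polyPoch (a b : RatFunc ℚ) (k : ℕ) :
    qPoch a k * qPoch b k * qv ^ k / (qPoch qv k ^ 2 * qPoch (qv ^ 2) k) * Psi β (x * polyPoch k)
      = (qv - 1) * hahnTerm a b k := by
  have := qPoch_qv_ne_zero k
  rw [h.psi_X_mul_polyPoch, hahnTerm, hahnCoeff]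
  field_simp

end Carlitz

/-- `f ↦ Ψ(x·f)` vanishes on `Pₙ` for `n ≥ 1`: the ratios `βₙ₊₁/β₁` are the moments
of the q-Hahn family with parameters `(c, d) = (0, 1)`. -/
theorem psi_qHahn01 (β : ℕ → RatFunc ℚ) (h : IsCarlitz β) (n : ℕ) (hn : 1 ≤ n) :
    Psi β (Polynomial.X * P n) = 0 := by
  have hsum := mul_sum_hahnTerm (qv_zpow_neg_mul_qv_pow_add_two n) (n + 1)
  rw [hahnCoeff_qv_zpow_neg_succ, mul_zero, mul_eq_zero,
    or_iff_right (mul_ne_zero (one_sub_qv_zpow_neg_ne_zero (by omega))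
      (one_sub_qv_pow_ne_zero (by omega)))] at hsum
  rw [P, mul_sum, ← coe_psiₗ, map_sum]
  simp only [mul_left_comm x, coe_psiₗ, psi_C_mul, h.mul_psi_X_mul_polyPoch]
  rw [← mul_sum, hsum, mul_zero]
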